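/- For any disjunctive definite program P and interpretation M = ⟨I,T⟩: M is a model of P if and only if the set of false atoms of T3_P(M) is a superset of (or equal to) the set of false atoms of M, i.e., T′ ∪ I′ ⊆ T ∪ I where T3_P(⟨I,T⟩) = ⟨I′,T′⟩. -/

import Mathlib

open Classical

/-- The three truth values: true, false, inadmissible. -/
inductive TV : Type where
  | t : TV
  | f : TV
  | i : TV
deriving DecidableEq

/-- Kleene strong three-valued conjunction. -/
def TV.and : TV → TV → TV
  | .t, .t => .t
  | .f, _ => .f
  | _, .f => .f
  | _, _ => .i

/-- Kleene strong three-valued disjunction. -/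
def TV.or : TV → TV → TV
  | .f, .f => .f
  | .t, _ => .t
  | _, .t => .t
  | _, _ => .i

/-- Ground body formulas over a set `α` of ground atoms:
built from atoms using binary conjunction and disjunction. -/
inductive Body (α : Type*) : Type _ where
  | atom : α → Body α
  | conj : Body α → Body α → Body α
  | disj : Body α → Body α → Body α

variable {α : Type*}

/-- Value of an atom in the interpretation `⟨I,T⟩` (inadmissible atoms `I`,
true atoms `T`, all other atoms false). -/
noncomputable def atomVal (I T : Set α) (a : α) : TV :=
  if a ∈ T then TV.t else if a ∈ I then TV.i else TV.f

/-- Kleene strong three-valued evaluation of a body formula in `⟨I,T⟩`. -/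
noncomputable def beval (I T : Set α) : Body α → TV
  | .atom a => atomVal I T a
  | .conj b c => TV.and (beval I T b) (beval I T c)
  | .disj b c => TV.or (beval I T b) (beval I T c)

/-- A (ground) disjunctive definite program: a set of ground clause instances
`H ← B`, represented as pairs `(H, B)`. -/
abbrev Program (α : Type*) := Set (α × Body α)

/-- `⟨I,T⟩` is a model of `P`: no clause instance `H ← B` in `P` has `H`
evaluating to F while `B` evaluates to T or I (i.e. head F implies body F). -/
def IsModel (P : Program α) (I T : Set α) : Prop :=
  ∀ c ∈ P, atomVal I T c.1 = TV.f → beval I T c.2 = TV.f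

/-- The set of true atoms of `T3_P(⟨I,T⟩)`: atoms `A` such that some clause
instance `A ← B` in `P` has `B` evaluating to T in `⟨I,T⟩`. -/
def T3True {α : Type*} (P : Program α) (I T : Set α) : Set α :=
  {a | ∃ c ∈ P, c.1 = a ∧ beval I T c.2 = TV.t}

/-- The set of false atoms of `T3_P(⟨I,T⟩)`: atoms `A` such that every clause
instance `A ← B` in `P` has `B` evaluating to F in `⟨I,T⟩`. -/
def T3False {α : Type*} (P : Program α) (I T : Set α) : Set α :=
  {a | ∀ c ∈ P, c.1 = a → beval I T c.2 = TV.f}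

/-- The set of inadmissible atoms of `T3_P(⟨I,T⟩)`: all remaining atoms. -/
def T3Inad {α : Type*} (P : Program α) (I T : Set α) : Set α :=
  (T3True P I T ∪ T3False P I T)ᶜ

/-! Both sides say that every atom false in `⟨I,T⟩` is false in `T3_P⟨I,T⟩`: the model condition
says so clause by clause, and `T′ ∪ I′` is the complement of the false atoms of `T3_P⟨I,T⟩`
because no body evaluates to both T and F. -/

theorem atomVal_eq_f_iff {I T : Set α} {a : α} : atomVal I T a = TV.f ↔ a ∉ T ∪ I := by
  by_cases hT : a ∈ T <;> by_cases hI : a ∈ I <;> simp [atomVal, hT, hI]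

theorem isModel_iff_compl_subset_T3False {P : Program α} {I T : Set α} :
    IsModel P I T ↔ (T ∪ I)ᶜ ⊆ T3False P I T := by
  simp only [IsModel, atomVal_eq_f_iff]
  constructor
  · rintro hM a ha c hc rfl
    exact hM c hc ha
  · intro hsub c hc ha
    exact hsub ha c hc rfl

theorem disjoint_T3True_T3False {P : Program α} {I T : Set α} :
    Disjoint (T3True P I T) (T3False P I T) := by
  rw [Set.disjoint_left]
  rintro a ⟨c, hc, rfl, hct⟩ hF
  rw [hF c hc rfl] at hct
  exact TV.noConfusion hct

theorem T3True_union_T3Inad {P : Program α} {I T : Set α} :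
    T3True P I T ∪ T3Inad P I T = (T3False P I T)ᶜ := by
  ext a
  have hnot_both : a ∈ T3True P I T → a ∉ T3False P I T :=
    fun h => disjoint_T3True_T3False.subset_compl_right h
  simp only [T3Inad, Set.mem_union, Set.mem_compl_iff]
  tauto

theorem model_iff_T3_false_superset_general {α : Type*} (P : Program α) (I T : Set α) :
    IsModel P I T ↔ T3True P I T ∪ T3Inad P I T ⊆ T ∪ I := by
  rw [isModel_iff_compl_subset_T3False, T3True_union_T3Inad, Set.compl_subset_comm]

/-- `⟨I,T⟩` is a model of `P` iff the set of false atoms of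
`T3_P(⟨I,T⟩) = ⟨I′,T′⟩` is a superset of the set of false atoms of `⟨I,T⟩`,
i.e. `T′ ∪ I′ ⊆ T ∪ I`. -/
theorem model_iff_T3_false_superset {α : Type*} (P : Program α) (I T : Set α)
    (hdisj : Disjoint I T) :
    IsModel P I T ↔ T3True P I T ∪ T3Inad P I T ⊆ T ∪ I :=
  model_iff_T3_false_superset_general P I T
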